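/- arXiv:2403.13601 — 2 statements merged into one kernel-verified Lean document; each statement's English description precedes it below -/
import Mathlib

section
/- Let f : D → ℝ be a continuous piecewise affine function on convex D ⊆ ℝⁿ with regions O_1, …, O_M and local affine functions l_{loc(i)}. With I_{≥,i} = { j : l_j ≥ l_{loc(i)} on O_i }, the lattice PWA expression F(x) = max_{i=1,…,M} min_{j ∈ I_{≥,i}} l_j(x) satisfies F(x) ≥ f(x) for all x ∈ D. -/
/-- the lattice PWA expression
`F(x) = max_i min_{j ∈ I_{≥,i}} l_j(x)` built from a continuous PWA function
`f` lower-bounds by `f`, i.e. `F(x) ≥ f(x)` on the domain. -/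
theorem lattice_expression_ge_f
    (n M : ℕ) (hM : 0 < M) (D : Set (Fin n → ℝ)) (hD : Convex ℝ D)
    (O : Fin M → Set (Fin n → ℝ)) (hOconv : ∀ i, Convex ℝ (O i))
    (hOne : ∀ i, (O i).Nonempty)
    (hpart : (⋃ i, O i) = D)
    (hdisj : ∀ i j, i ≠ j → O i ∩ O j = ∅)
    (l : Fin M → ((Fin n → ℝ) →ᵃ[ℝ] ℝ))
    (loc : Fin M → Fin M)
    (f : (Fin n → ℝ) → ℝ) (hf : ContinuousOn f D)
    (hloc : ∀ i, ∀ x ∈ O i, f x = l (loc i) x)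
    (F : (Fin n → ℝ) → ℝ)
    (hF : ∀ x, F x = sSup {y : ℝ | ∃ i : Fin M,
      y = sInf {z : ℝ | ∃ j, (∀ w ∈ O i, l (loc i) w ≤ l j w) ∧ z = l j x}}) :
    ∀ x ∈ D, f x ≤ F x := by
  intro x hx
  rw [← hpart] at hx
  obtain ⟨k, hk⟩ := Set.mem_iUnion.1 hx
  rw [hF x]
  have hfin : ({y : ℝ | ∃ i : Fin M,
      y = sInf {z : ℝ | ∃ j, (∀ w ∈ O i, l (loc i) w ≤ l j w) ∧ z = l j x}}).Finite := by
    have : {y : ℝ | ∃ i : Fin M,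
        y = sInf {z : ℝ | ∃ j, (∀ w ∈ O i, l (loc i) w ≤ l j w) ∧ z = l j x}}
        = Set.range (fun i : Fin M =>
          sInf {z : ℝ | ∃ j, (∀ w ∈ O i, l (loc i) w ≤ l j w) ∧ z = l j x}) := by
      ext y; simp [Set.mem_range, eq_comm]
    rw [this]
    exact Set.finite_range _
  have hmem : sInf {z : ℝ | ∃ j, (∀ w ∈ O k, l (loc k) w ≤ l j w) ∧ z = l j x}
      ∈ {y : ℝ | ∃ i : Fin M,
        y = sInf {z : ℝ | ∃ j, (∀ w ∈ O i, l (loc i) w ≤ l j w) ∧ z = l j x}} :=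
    ⟨k, rfl⟩
  have hle : f x ≤ sInf {z : ℝ | ∃ j, (∀ w ∈ O k, l (loc k) w ≤ l j w) ∧ z = l j x} := by
    apply le_csInf
    · exact ⟨l (loc k) x, loc k, fun w hw => le_rfl, rfl⟩
    · rintro z ⟨j, hj, rfl⟩
      rw [hloc k x hk]
      exact hj x hk
  exact hle.trans (le_csSup hfin.bddAbove hmem)
end

section
/- Let F : ℝⁿ → ℝ be convex and piecewise quadratic on a compact convex set X (i.e., X is partitioned into finitely many polyhedral regions on each of which F is a quadratic polynomial), and suppose F is differentiable on X. Then there exists M ≥ 0 such that F(y) ≤ F(x) + ∇F(x)·(y − x) + M‖y − x‖² for all x, y ∈ X. -/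
open Matrix

open Set Filter Topology

/-- Local affine structure of the derivative from the right. -/
lemma locaff {ι : Type*} [Finite ι] (g d : ℝ → ℝ)
    (S : ι → Set ℝ) (a b c : ι → ℝ)
    (hg : ∀ t ∈ Icc (0:ℝ) 1, HasDerivAt g (d t) t)
    (hcover : Icc (0:ℝ) 1 ⊆ ⋃ i, S i)
    (hconv : ∀ i, Convex ℝ (S i))
    (hquad : ∀ i, ∀ t ∈ S i, g t = a i * t ^ 2 + b i * t + c i)
    {u : ℝ} (hu : u ∈ Ico (0:ℝ) 1) :
    ∃ δ > 0, u + δ ≤ 1 ∧ ∃ i, ∀ w ∈ Ico u (u + δ), d w = 2 * a i * w + b i := by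
  have h1u : (0:ℝ) < 1 - u := by linarith [hu.2]
  set t : ℕ → ℝ := fun n => u + (1 - u) / (n + 2) with ht
  have htpos : ∀ n : ℕ, u < t n := by
    intro n
    have hn : (0:ℝ) < (n:ℝ) + 2 := by positivity
    have := div_pos h1u hn
    simp only [ht]
    linarith
  have htle : ∀ n : ℕ, t n ≤ 1 := by
    intro n
    have h2 : (1:ℝ) ≤ (n:ℝ) + 2 := by
      have := Nat.cast_nonneg (α := ℝ) n; linarith
    have := div_le_self (le_of_lt h1u) h2
    simp only [ht]; linarith
  have htIcc : ∀ n, t n ∈ Icc (0:ℝ) 1 :=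
    fun n => ⟨le_trans hu.1 (le_of_lt (htpos n)), htle n⟩
  have hex : ∀ n : ℕ, ∃ i, t n ∈ S i := fun n => mem_iUnion.1 (hcover (htIcc n))
  choose φ hφ using hex
  obtain ⟨i, hi⟩ := Finite.exists_infinite_fiber φ
  have hfib : (φ ⁻¹' {i}).Infinite := Set.infinite_coe_iff.1 hi
  obtain ⟨n₀, hn₀⟩ := hfib.nonempty
  have hn₀i : t n₀ ∈ S i := by
    have := hφ n₀
    rwa [show φ n₀ = i from hn₀] at this
  have huδ : u + (t n₀ - u) = t n₀ := by ring
  refine ⟨t n₀ - u, by linarith [htpos n₀], by rw [huδ]; exact htle n₀, i, ?_⟩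
  have hsub : Ioo u (t n₀) ⊆ S i := by
    intro w hw
    obtain ⟨N, hN⟩ := exists_nat_gt ((1 - u) / (w - u))
    obtain ⟨m, hm, hmN⟩ := hfib.exists_gt N
    have hwu : 0 < w - u := by linarith [hw.1]
    have hm2 : (1 - u) / (w - u) < (m:ℝ) + 2 := by
      have : (N:ℝ) ≤ (m:ℝ) := by exact_mod_cast le_of_lt hmN
      linarith
    have hwm : t m < w := by
      simp only [ht]
      have : (1 - u) / ((m:ℝ) + 2) < w - u := by
        rw [div_lt_iff₀ (by positivity)]
        calc 1 - u = ((1 - u) / (w - u)) * (w - u) := by field_simp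
          _ < ((m:ℝ) + 2) * (w - u) := by
              exact mul_lt_mul_of_pos_right hm2 hwu
          _ = (w - u) * ((m:ℝ) + 2) := by ring
      linarith
    have hmi : t m ∈ S i := by
      have := hφ m
      rwa [show φ m = i from hm] at this
    exact (hconv i).ordConnected.out hmi hn₀i ⟨le_of_lt hwm, le_of_lt hw.2⟩
  have hdq : ∀ w : ℝ, HasDerivAt (fun z : ℝ => a i * z ^ 2 + b i * z + c i)
      (2 * a i * w + b i) w := by
    intro w
    have h1 : HasDerivAt (fun z : ℝ => z ^ 2) (2 * w) w := by
      simpa using hasDerivAt_pow 2 w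
    have := ((h1.const_mul (a i)).add ((hasDerivAt_id w).const_mul (b i))).add_const (c i)
    exact this.congr_deriv (by ring)
  have huIcc : u ∈ Icc (0:ℝ) 1 := ⟨hu.1, le_of_lt hu.2⟩
  have hdIoo : ∀ w ∈ Ioo u (t n₀), d w = 2 * a i * w + b i := by
    intro w hw
    have hwIcc : w ∈ Icc (0:ℝ) 1 :=
      ⟨le_trans hu.1 (le_of_lt hw.1), le_trans (le_of_lt hw.2) (htle n₀)⟩
    have hgq : HasDerivAt g (2 * a i * w + b i) w := by
      refine (hdq w).congr_of_eventuallyEq ?_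
      exact eventually_of_mem (Ioo_mem_nhds hw.1 hw.2) (fun z hz => hquad i z (hsub hz))
    exact (hg w hwIcc).unique hgq
  have hval : g u = a i * u ^ 2 + b i * u + c i := by
    have hne : (𝓝[Ioo u (t n₀)] u).NeBot := by
      rw [← mem_closure_iff_nhdsWithin_neBot, closure_Ioo (ne_of_lt (htpos n₀))]
      exact ⟨le_refl u, le_of_lt (htpos n₀)⟩
    have l1 : Tendsto g (𝓝[Ioo u (t n₀)] u) (𝓝 (g u)) :=
      (hg u huIcc).continuousAt.continuousWithinAt.mono (fun z _ => trivial)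
    have l2 : Tendsto (fun z : ℝ => a i * z ^ 2 + b i * z + c i) (𝓝[Ioo u (t n₀)] u)
        (𝓝 (a i * u ^ 2 + b i * u + c i)) := by
      apply Continuous.continuousWithinAt
      continuity
    have l3 : Tendsto g (𝓝[Ioo u (t n₀)] u) (𝓝 (a i * u ^ 2 + b i * u + c i)) := by
      refine Filter.Tendsto.congr' ?_ l2
      exact eventuallyEq_of_mem self_mem_nhdsWithin (fun z hz => (hquad i z (hsub hz)).symm)
    exact tendsto_nhds_unique l1 l3
  have hdu : d u = 2 * a i * u + b i := by
    have e1 : HasDerivWithinAt g (d u) (Ici u) u := (hg u huIcc).hasDerivWithinAt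
    have e2 : HasDerivWithinAt g (2 * a i * u + b i) (Ici u) u := by
      refine ((hdq u).hasDerivWithinAt).congr_of_eventuallyEq ?_ hval
      refine eventuallyEq_of_mem (Ico_mem_nhdsGE_of_mem ⟨le_refl u, htpos n₀⟩) ?_
      intro z hz
      rcases eq_or_lt_of_le hz.1 with h | h
      · rw [← h]; exact hval
      · exact hquad i z (hsub ⟨h, hz.2⟩)
    exact (uniqueDiffOn_Ici u u self_mem_Ici).eq_deriv _ e1 e2
  intro w hw
  rw [huδ] at hw
  rcases eq_or_lt_of_le hw.1 with h | h
  · rw [← h]; exact hdu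
  · exact hdIoo w ⟨h, hw.2⟩

lemma key1d {ι : Type*} [Finite ι] (g d : ℝ → ℝ) (A : ℝ)
    (S : ι → Set ℝ) (a b c : ι → ℝ)
    (hg : ∀ t ∈ Icc (0:ℝ) 1, HasDerivAt g (d t) t)
    (hcover : Icc (0:ℝ) 1 ⊆ ⋃ i, S i)
    (hconv : ∀ i, Convex ℝ (S i))
    (hquad : ∀ i, ∀ t ∈ S i, g t = a i * t ^ 2 + b i * t + c i)
    (ha : ∀ i, a i ≤ A) :
    g 1 ≤ g 0 + d 0 + A := by
  -- reflected data, to get the left-sided local affine structure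
  have hg' : ∀ s ∈ Icc (0:ℝ) 1, HasDerivAt (fun s : ℝ => g (1 - s)) (-d (1 - s)) s := by
    intro s hs
    have h1 : HasDerivAt (fun s : ℝ => 1 - s) (-1) s := by
      simpa using (hasDerivAt_id s).const_sub 1
    have h2 : (1 - s) ∈ Icc (0:ℝ) 1 := ⟨by linarith [hs.2], by linarith [hs.1]⟩
    have := (hg _ h2).comp s h1
    simpa [mul_comm, Function.comp_def] using this
  have hcover' : Icc (0:ℝ) 1 ⊆ ⋃ i, (fun s : ℝ => 1 - s) ⁻¹' S i := by
    intro s hs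
    have h2 : (1 - s) ∈ Icc (0:ℝ) 1 := ⟨by linarith [hs.2], by linarith [hs.1]⟩
    obtain ⟨i, hi⟩ := mem_iUnion.1 (hcover h2)
    exact mem_iUnion.2 ⟨i, hi⟩
  have hconv' : ∀ i, Convex ℝ ((fun s : ℝ => 1 - s) ⁻¹' S i) := by
    intro i
    rw [convex_iff_ordConnected]
    refine ⟨fun x hx y hy z hz => ?_⟩
    refine (hconv i).ordConnected.out hy hx ⟨?_, ?_⟩
    · show (1:ℝ) - y ≤ 1 - z; linarith [hz.2]
    · show (1:ℝ) - z ≤ 1 - x; linarith [hz.1]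
  have hquad' : ∀ i, ∀ s ∈ (fun s : ℝ => 1 - s) ⁻¹' S i,
      g (1 - s) = a i * s ^ 2 + (-(2 * a i) - b i) * s + (a i + b i + c i) := by
    intro i s hs
    have := hquad i (1 - s) hs
    rw [this]; ring
  -- left-sided local affine structure
  have locL : ∀ u ∈ Ioc (0:ℝ) 1, ∃ δ > 0, ∃ i B,
      ∀ w ∈ Ioc (u - δ) u, d w = 2 * a i * w + B := by
    intro u hu
    have hu' : 1 - u ∈ Ico (0:ℝ) 1 := ⟨by linarith [hu.2], by linarith [hu.1]⟩
    obtain ⟨δ, hδ, hδ1, i, haff⟩ :=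
      locaff (fun s : ℝ => g (1 - s)) (fun s : ℝ => -d (1 - s)) _ a
        (fun i => -(2 * a i) - b i) (fun i => a i + b i + c i)
        hg' hcover' hconv' hquad' hu'
    refine ⟨δ, hδ, i, b i, ?_⟩
    intro w hw
    have hs : (1 - w) ∈ Ico (1 - u) (1 - u + δ) := ⟨by linarith [hw.2], by linarith [hw.1]⟩
    have := haff (1 - w) hs
    -- -d (1 - (1 - w)) = 2 a i (1-w) + (-(2 a i) - b i)
    have hww : (1 : ℝ) - (1 - w) = w := by ring
    rw [hww] at this
    linarith [this]
  have locR : ∀ u ∈ Ico (0:ℝ) 1, ∃ δ > 0, ∃ i B,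
      ∀ w ∈ Ico u (u + δ), d w = 2 * a i * w + B := by
    intro u hu
    obtain ⟨δ, hδ, hδ1, i, haff⟩ := locaff g d S a b c hg hcover hconv hquad hu
    exact ⟨δ, hδ, i, b i, haff⟩
  -- the sup argument : md ≥ 0 on [0,1]
  set md : ℝ → ℝ := fun w => d 0 + 2 * A * w - d w with hmd
  have md0 : md 0 = 0 := by simp [hmd]
  set T : Set ℝ := {u : ℝ | u ∈ Icc (0:ℝ) 1 ∧ ∀ w ∈ Icc (0:ℝ) u, 0 ≤ md w} with hT
  have h0T : (0:ℝ) ∈ T := by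
    refine ⟨⟨le_refl 0, zero_le_one⟩, ?_⟩
    intro w hw
    have : w = 0 := le_antisymm hw.2 hw.1
    rw [this, md0]
  have hbdd : BddAbove T := ⟨1, fun u hu => hu.1.2⟩
  have hTne : T.Nonempty := ⟨0, h0T⟩
  set cs := sSup T with hcs
  have hcs0 : 0 ≤ cs := le_csSup hbdd h0T
  have hcs1 : cs ≤ 1 := csSup_le hTne (fun u hu => hu.1.2)
  have hlt : ∀ w, 0 ≤ w → w < cs → 0 ≤ md w := by
    intro w hw0 hw
    obtain ⟨u, huT, hwu⟩ := exists_lt_of_lt_csSup hTne hw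
    exact huT.2 w ⟨hw0, le_of_lt hwu⟩
  have hcsT : ∀ w ∈ Icc (0:ℝ) cs, 0 ≤ md w := by
    intro w hw
    rcases lt_or_eq_of_le hw.2 with h | h
    · exact hlt w hw.1 h
    · rcases eq_or_lt_of_le hcs0 with h0 | h0
      · rw [h, ← h0, md0]
      · obtain ⟨δ, hδ, i, B, haff⟩ := locL cs ⟨h0, hcs1⟩
        set w₀ := max (cs - δ / 2) (cs / 2) with hw₀
        have hw₀1 : cs - δ < w₀ := lt_of_lt_of_le (by linarith) (le_max_left _ _)
        have hw₀2 : w₀ < cs := max_lt (by linarith) (by linarith)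
        have hw₀0 : 0 ≤ w₀ := le_trans (by linarith) (le_max_right _ _)
        have h1 : 0 ≤ md w₀ := hlt w₀ hw₀0 hw₀2
        have e1 := haff w₀ ⟨hw₀1, le_of_lt hw₀2⟩
        have e2 := haff cs ⟨by linarith, le_refl cs⟩
        have hai := ha i
        rw [h]
        simp only [hmd] at h1 ⊢
        rw [e2]
        rw [e1] at h1
        nlinarith [mul_nonneg (sub_nonneg.mpr hai) (sub_nonneg.mpr hw₀2.le)]
  have hcseq : cs = 1 := by
    by_contra hne
    have hcslt : cs < 1 := lt_of_le_of_ne hcs1 hne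
    obtain ⟨δ, hδ, i, B, haff⟩ := locR cs ⟨hcs0, hcslt⟩
    have hmem : cs + min (δ / 2) ((1 - cs) / 2) ∈ T := by
      set ε := min (δ / 2) ((1 - cs) / 2) with hε
      have hε0 : 0 < ε := lt_min (by linarith) (by linarith)
      have hε1 : ε ≤ δ / 2 := min_le_left _ _
      have hε2 : ε ≤ (1 - cs) / 2 := min_le_right _ _
      refine ⟨⟨by linarith, by linarith⟩, ?_⟩
      intro w hw
      rcases le_or_gt w cs with h | h
      · exact hcsT w ⟨hw.1, h⟩
      · have e1 := haff cs ⟨le_refl _, by linarith⟩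
        have e2 := haff w ⟨le_of_lt h, by linarith [hw.2]⟩
        have h3 : 0 ≤ md cs := hcsT cs ⟨hcs0, le_refl _⟩
        have hai := ha i
        simp only [hmd] at h3 ⊢
        rw [e2]
        rw [e1] at h3
        nlinarith [mul_nonneg (sub_nonneg.mpr hai) (sub_nonneg.mpr h.le)]
    have := le_csSup hbdd hmem
    have hε0 : 0 < min (δ / 2) ((1 - cs) / 2) := lt_min (by linarith) (by linarith)
    linarith
  have hmdnn : ∀ w ∈ Icc (0:ℝ) 1, 0 ≤ md w := by
    intro w hw
    exact hcsT w (by rw [hcseq]; exact hw)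
  -- the comparison function m
  set m : ℝ → ℝ := fun w => g 0 + d 0 * w + A * w ^ 2 - g w with hm
  have hmderiv : ∀ w ∈ Icc (0:ℝ) 1, HasDerivAt m (md w) w := by
    intro w hw
    have hq : HasDerivAt (fun w : ℝ => A * w ^ 2) (A * (2 * w)) w := by
      simpa using (hasDerivAt_pow 2 w).const_mul A
    have hlin : HasDerivAt (fun w : ℝ => g 0 + d 0 * w) (d 0) w := by
      simpa using ((hasDerivAt_id w).const_mul (d 0)).const_add (g 0)
    have := (hlin.add hq).sub (hg w hw)
    exact this.congr_deriv (by simp only [hmd]; ring)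
  have hmono : MonotoneOn m (Icc (0:ℝ) 1) := by
    apply monotoneOn_of_deriv_nonneg (convex_Icc 0 1)
    · intro w hw
      exact (hmderiv w hw).continuousAt.continuousWithinAt
    · intro w hw
      rw [interior_Icc] at hw
      exact ((hmderiv w (Ioo_subset_Icc_self hw)).differentiableAt).differentiableWithinAt
    · intro w hw
      rw [interior_Icc] at hw
      rw [(hmderiv w (Ioo_subset_Icc_self hw)).deriv]
      exact hmdnn w (Ioo_subset_Icc_self hw)
  have hfin := hmono (left_mem_Icc.2 zero_le_one) (right_mem_Icc.2 zero_le_one) zero_le_one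
  simp only [hm] at hfin
  nlinarith [hfin]


/-- a convex, differentiable, piecewise quadratic function on a
compact convex set admits a global quadratic upper expansion:
`F(y) ≤ F(x) + ∇F(x)·(y − x) + M‖y − x‖²` for some `M ≥ 0`. -/
theorem piecewise_quadratic_upper_expansion
    (n k : ℕ) (X : Set (EuclideanSpace ℝ (Fin n)))
    (hXc : IsCompact X) (hXconv : Convex ℝ X)
    (F : EuclideanSpace ℝ (Fin n) → ℝ)
    (hFconv : ConvexOn ℝ X F)
    (O : Fin k → Set (EuclideanSpace ℝ (Fin n)))
    (hOconv : ∀ i, Convex ℝ (O i))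
    (hpart : (⋃ i, O i) = X)
    (hdisj : ∀ i j, i ≠ j → O i ∩ O j = ∅)
    (P : Fin k → Matrix (Fin n) (Fin n) ℝ)
    (qv : Fin k → EuclideanSpace ℝ (Fin n)) (r : Fin k → ℝ)
    (hquadpieces : ∀ i, ∀ x ∈ O i,
      F x = (1 / 2) * inner ℝ x (Matrix.toEuclideanLin (P i) x)
        + inner ℝ (qv i) x + r i)
    (hdiff : ∀ x ∈ X, DifferentiableAt ℝ F x) :
    ∃ M : ℝ, 0 ≤ M ∧ ∀ x ∈ X, ∀ y ∈ X,
      F y ≤ F x + fderiv ℝ F x (y - x) + M * ‖y - x‖ ^ 2 := by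
  classical
  set Lm : Fin k → (EuclideanSpace ℝ (Fin n) →ₗ[ℝ] EuclideanSpace ℝ (Fin n)) :=
    fun i => Matrix.toEuclideanLin (P i) with hLm
  set L : Fin k → (EuclideanSpace ℝ (Fin n) →L[ℝ] EuclideanSpace ℝ (Fin n)) :=
    fun i => LinearMap.toContinuousLinearMap (Lm i) with hL
  set M : ℝ := ∑ i, ‖L i‖ with hM
  have hM0 : 0 ≤ M := Finset.sum_nonneg fun i _ => norm_nonneg _
  refine ⟨M, hM0, ?_⟩
  intro x hx y hy
  set v := y - x with hv
  set g : ℝ → ℝ := fun t => F (x + t • v) with hgdef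
  set d : ℝ → ℝ := fun t => fderiv ℝ F (x + t • v) v with hddef
  have hseg : ∀ t ∈ Icc (0:ℝ) 1, x + t • v ∈ X := by
    intro t ht
    have h := hXconv hx hy (by linarith [ht.2] : (0:ℝ) ≤ 1 - t) ht.1 (by ring)
    have hxx : x + t • v = (1 - t) • x + t • y := by
      simp only [hv, smul_sub, sub_smul, one_smul]
      abel
    rw [hxx]; exact h
  have hg : ∀ t ∈ Icc (0:ℝ) 1, HasDerivAt g (d t) t := by
    intro t ht
    have hdF := (hdiff _ (hseg t ht)).hasFDerivAt
    have hc : HasDerivAt (fun t : ℝ => x + t • v) v t := by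
      simpa using ((hasDerivAt_id t).smul_const v).const_add x
    exact hdF.comp_hasDerivAt t hc
  set S : Fin k → Set ℝ := fun i => {t : ℝ | x + t • v ∈ O i} with hS
  have hcover : Icc (0:ℝ) 1 ⊆ ⋃ i, S i := by
    intro t ht
    have h := hseg t ht
    rw [← hpart] at h
    obtain ⟨i, hi⟩ := mem_iUnion.1 h
    exact mem_iUnion.2 ⟨i, hi⟩
  have hconvS : ∀ i, Convex ℝ (S i) := by
    intro i t1 ht1 t2 ht2 p q hp hq hpq
    show x + (p • t1 + q • t2) • v ∈ O i
    have hxx : x + (p • t1 + q • t2) • v = p • (x + t1 • v) + q • (x + t2 • v) := by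
      have hx1 : p • x + q • x = x := by rw [← add_smul, hpq, one_smul]
      calc x + (p • t1 + q • t2) • v
          = (p • x + q • x) + ((p * t1) • v + (q * t2) • v) := by
            rw [hx1]; simp only [smul_eq_mul, add_smul]
        _ = p • (x + t1 • v) + q • (x + t2 • v) := by
            simp only [smul_add, smul_smul]; abel
    rw [hxx]
    exact hOconv i ht1 ht2 hp hq hpq
  set a : Fin k → ℝ := fun i => (1 / 2) * (inner ℝ v (Lm i v) : ℝ) with haa
  set b : Fin k → ℝ := fun i =>
    (1 / 2) * (inner ℝ x (Lm i v) : ℝ) + (1 / 2) * (inner ℝ v (Lm i x) : ℝ)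
      + (inner ℝ (qv i) v : ℝ) with hbb
  set c : Fin k → ℝ := fun i =>
    (1 / 2) * (inner ℝ x (Lm i x) : ℝ) + (inner ℝ (qv i) x : ℝ) + r i with hcc
  have hquadS : ∀ i, ∀ t ∈ S i, g t = a i * t ^ 2 + b i * t + c i := by
    intro i t ht
    have h := hquadpieces i _ ht
    show F (x + t • v) = _
    rw [h]
    simp only [haa, hbb, hcc, hLm, map_add, inner_add_left, inner_add_right,
      real_inner_smul_left, real_inner_smul_right, smul_eq_mul, _root_.map_smul]
    ring
  have hA : ∀ i, a i ≤ M * ‖v‖ ^ 2 := by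
    intro i
    have h1 : (inner ℝ v (Lm i v) : ℝ) ≤ ‖v‖ * ‖Lm i v‖ := real_inner_le_norm v _
    have h2 : ‖Lm i v‖ ≤ ‖L i‖ * ‖v‖ := by
      have h := (L i).le_opNorm v
      have hcoe : L i v = Lm i v := rfl
      rwa [hcoe] at h
    have h3 : ‖L i‖ ≤ M := by
      rw [hM]
      exact Finset.single_le_sum (f := fun i => ‖L i‖) (fun i _ => norm_nonneg _)
        (Finset.mem_univ i)
    have h4 : (0:ℝ) ≤ ‖v‖ := norm_nonneg v
    have h5 : (0:ℝ) ≤ ‖L i‖ := norm_nonneg _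
    simp only [haa]
    nlinarith
  have key := key1d g d (M * ‖v‖ ^ 2) S a b c hg hcover hconvS hquadS hA
  have e1 : x + (1:ℝ) • v = y := by simp [hv]
  have e0 : x + (0:ℝ) • v = x := by simp
  simp only [hgdef, hddef] at key
  rw [e1, e0] at key
  exact key
end
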